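/- arXiv:2511.15228 — 5 statements merged into one kernel-verified Lean document; each statement's English description precedes it below -/
import Mathlib

section
/- Fix ρ > 0 and reals 0 < s ≤ t. Then ρ^{−2θ} · ∫_0^{ρs} ∫_ℝ exp(−(ρt+ρs−2r)|ξ|^α) |ξ|^{1−2H} dξ dr = ∫_0^s ∫_ℝ exp(−(t+s−2r)|ξ|^α) |ξ|^{1−2H} dξ dr, and these Lebesgue integrals are finite. (This is the covariance identity showing that the temporal covariance E[u(ρt,x)u(ρs,x)] of the solution of the stochastic fractional heat equation scales as ρ^{2θ}, i.e. the solution process in time is self-similar of index θ.) -/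
/-!
The inner `ξ`-integral is a Gamma integral: for `b > 0`,
`∫ exp (-b |ξ|^α) |ξ|^q dξ = (2/α) Γ(κ) b^(-κ)` with `κ = (q + 1)/α`.
The covariance integral is therefore `(2/α) Γ(κ) ∫_0^s (T - 2r)^(-κ) dr`, which is finite since
`κ < 1`, and the substitution `r ↦ ρ r` shows that replacing `(s, T)` by `(ρ s, ρ T)` multiplies
it by `ρ^(1 - κ) = ρ^(2θ)`.
-/

open MeasureTheory Real Set

section GammaIntegral

variable {a q b : ℝ}

theorem integral_exp_neg_mul_abs_rpow_mul_abs_rpow (ha : 0 < a) (hq : -1 < q) (hb : 0 < b) :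
    ∫ ξ : ℝ, exp (-b * |ξ| ^ a) * |ξ| ^ q
      = 2 / a * Gamma ((q + 1) / a) * b ^ (-((q + 1) / a)) := by
  have h := integral_comp_abs (f := fun x : ℝ => x ^ q * exp (-b * x ^ a))
  rw [integral_rpow_mul_exp_neg_mul_rpow ha hq hb] at h
  simp_rw [mul_comm (exp _)]
  rw [h, neg_div]
  ring

theorem integrable_exp_neg_mul_abs_rpow_mul_abs_rpow (ha : 0 < a) (hq : -1 < q) (hb : 0 < b) :
    Integrable (fun ξ : ℝ => exp (-b * |ξ| ^ a) * |ξ| ^ q) := by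
  refine Integrable.of_integral_ne_zero ?_
  rw [integral_exp_neg_mul_abs_rpow_mul_abs_rpow ha hq hb]
  have : 0 < Gamma ((q + 1) / a) := Gamma_pos_of_pos (div_pos (by linarith) ha)
  positivity

end GammaIntegral

theorem integrableOn_Ioc_sub_two_mul_rpow_neg {k s T : ℝ} (hk : k < 1) (hs : 0 ≤ s) :
    IntegrableOn (fun r : ℝ => (T - 2 * r) ^ (-k)) (Ioc 0 s) := by
  have h := ((intervalIntegral.intervalIntegrable_rpow' (r := -k) (a := T - 2 * s) (b := T)
    (by linarith)).comp_sub_left T).comp_mul_left (c := 2)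
  rw [show (T - (T - 2 * s)) / 2 = s by ring, show (T - T) / 2 = 0 by ring] at h
  exact (intervalIntegrable_iff_integrableOn_Ioc_of_le hs).1 h.symm

theorem integral_Ioc_comp_mul_left {ρ s : ℝ} (hρ : 0 < ρ) (hs : 0 ≤ s) (f : ℝ → ℝ) :
    ∫ r in Ioc 0 (ρ * s), f r = ρ * ∫ r in Ioc 0 s, f (ρ * r) := by
  rw [← intervalIntegral.integral_of_le (by positivity), ← intervalIntegral.integral_of_le hs,
    intervalIntegral.integral_comp_mul_left f hρ.ne', mul_zero, smul_eq_mul,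
    mul_inv_cancel_left₀ hρ.ne']

theorem integral_Ioc_mul_sub_two_mul_rpow {k ρ s T : ℝ} (hρ : 0 < ρ) (hs : 0 ≤ s)
    (hT : 2 * s ≤ T) :
    ∫ r in Ioc 0 (ρ * s), (ρ * T - 2 * r) ^ (-k)
      = ρ ^ (1 - k) * ∫ r in Ioc 0 s, (T - 2 * r) ^ (-k) := by
  have homogeneous : ∀ r ∈ Ioc 0 s,
      (ρ * T - 2 * (ρ * r)) ^ (-k) = ρ ^ (-k) * (T - 2 * r) ^ (-k) := fun r hr => by
    rw [show ρ * T - 2 * (ρ * r) = ρ * (T - 2 * r) by ring, mul_rpow hρ.le (by linarith [hr.2])]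
  rw [integral_Ioc_comp_mul_left hρ hs, setIntegral_congr_fun measurableSet_Ioc homogeneous,
    integral_const_mul, ← mul_assoc, sub_eq_add_neg, rpow_add hρ, rpow_one]

section Covariance

variable {a q s T : ℝ}

theorem integral_exp_neg_sub_two_mul_eq (ha : 0 < a) (hq : -1 < q) (hT : 2 * s ≤ T) {r : ℝ}
    (hr : r ∈ Ioo 0 s) :
    ∫ ξ : ℝ, exp (-(T - 2 * r) * |ξ| ^ a) * |ξ| ^ q
      = 2 / a * Gamma ((q + 1) / a) * (T - 2 * r) ^ (-((q + 1) / a)) :=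
  integral_exp_neg_mul_abs_rpow_mul_abs_rpow ha hq (by linarith [hr.2])

theorem integral_Ioc_integral_exp_neg_sub_two_mul (ha : 0 < a) (hq : -1 < q) (hT : 2 * s ≤ T) :
    ∫ r in Ioc 0 s, ∫ ξ : ℝ, exp (-(T - 2 * r) * |ξ| ^ a) * |ξ| ^ q
      = 2 / a * Gamma ((q + 1) / a) * ∫ r in Ioc 0 s, (T - 2 * r) ^ (-((q + 1) / a)) := by
  rw [← integral_const_mul, integral_Ioc_eq_integral_Ioo, integral_Ioc_eq_integral_Ioo]
  exact setIntegral_congr_fun measurableSet_Ioo fun r hr =>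
    integral_exp_neg_sub_two_mul_eq ha hq hT hr

theorem integrableOn_Ioc_prod_univ_exp_neg_sub_two_mul (ha : 0 < a) (hq : -1 < q)
    (hκ : (q + 1) / a < 1) (hs : 0 ≤ s) (hT : 2 * s ≤ T) :
    IntegrableOn (fun p : ℝ × ℝ => exp (-(T - 2 * p.1) * |p.2| ^ a) * |p.2| ^ q)
      (Ioc 0 s ×ˢ univ) := by
  rw [IntegrableOn, Measure.volume_eq_prod, ← Measure.prod_restrict, Measure.restrict_univ,
    Measure.restrict_congr_set Ioo_ae_eq_Ioc.symm,
    integrable_prod_iff (by fun_prop)]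
  have hr : ∀ᵐ r ∂volume.restrict (Ioo 0 s), r ∈ Ioo 0 s := ae_restrict_mem measurableSet_Ioo
  constructor
  · filter_upwards [hr] with r hr
    exact integrable_exp_neg_mul_abs_rpow_mul_abs_rpow ha hq (by linarith [hr.2])
  · have houter := ((integrableOn_Ioc_sub_two_mul_rpow_neg (T := T) hκ hs).mono_set
      Ioo_subset_Ioc_self).const_mul (2 / a * Gamma ((q + 1) / a))
    refine houter.congr ?_
    filter_upwards [hr] with r hr
    refine (integral_exp_neg_sub_two_mul_eq ha hq hT hr).symm.trans
      (integral_congr_ae (.of_forall fun ξ => ?_))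
    exact (norm_of_nonneg (by positivity)).symm

end Covariance

theorem stmt_0_general (α H θ : ℝ)
    (hH₁ : (2 - α) / 2 < H) (hH₂ : H < 1)
    (hθ : θ = 1 / 2 - (1 - H) / α)
    (ρ : ℝ) (hρ : 0 < ρ) (s t : ℝ) (hs : 0 < s) (hst : s ≤ t) :
    IntegrableOn
      (fun p : ℝ × ℝ =>
        Real.exp (-(ρ * t + ρ * s - 2 * p.1) * |p.2| ^ α) * |p.2| ^ (1 - 2 * H))
      (Set.Ioc 0 (ρ * s) ×ˢ Set.univ) ∧
    IntegrableOn
      (fun p : ℝ × ℝ =>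
        Real.exp (-(t + s - 2 * p.1) * |p.2| ^ α) * |p.2| ^ (1 - 2 * H))
      (Set.Ioc 0 s ×ˢ Set.univ) ∧
    ρ ^ (-(2 * θ)) *
        ∫ r in Set.Ioc 0 (ρ * s), ∫ ξ : ℝ,
          Real.exp (-(ρ * t + ρ * s - 2 * r) * |ξ| ^ α) * |ξ| ^ (1 - 2 * H)
      = ∫ r in Set.Ioc 0 s, ∫ ξ : ℝ,
          Real.exp (-(t + s - 2 * r) * |ξ| ^ α) * |ξ| ^ (1 - 2 * H) := by
  have hα : 0 < α := by linarith
  have hq : -1 < 1 - 2 * H := by linarith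
  have hκ : (1 - 2 * H + 1) / α < 1 := by rw [div_lt_one hα]; linarith
  have hT : 2 * s ≤ t + s := by linarith
  have hρT : 2 * (ρ * s) ≤ ρ * t + ρ * s := by nlinarith
  have hpow : ρ ^ (-(2 * θ)) * ρ ^ (1 - (1 - 2 * H + 1) / α) = 1 := by
    rw [← rpow_add hρ, hθ, show -(2 * (1 / 2 - (1 - H) / α)) + (1 - (1 - 2 * H + 1) / α) = 0 by
      field_simp; ring, rpow_zero]
  refine ⟨integrableOn_Ioc_prod_univ_exp_neg_sub_two_mul hα hq hκ (by positivity) hρT,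
    integrableOn_Ioc_prod_univ_exp_neg_sub_two_mul hα hq hκ hs.le hT, ?_⟩
  rw [integral_Ioc_integral_exp_neg_sub_two_mul hα hq hρT,
    integral_Ioc_integral_exp_neg_sub_two_mul hα hq hT, show ρ * t + ρ * s = ρ * (t + s) by ring,
    integral_Ioc_mul_sub_two_mul_rpow hρ hs.le hT]
  linear_combination (2 / α * Gamma ((1 - 2 * H + 1) / α) *
    ∫ r in Ioc 0 s, (t + s - 2 * r) ^ (-((1 - 2 * H + 1) / α))) * hpow

/-- Self-similarity covariance identity: for `α ∈ (1,2]`, `H ∈ ((2-α)/2, 1)`,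
`θ = 1/2 - (1-H)/α`, `ρ > 0` and `0 < s ≤ t`, the rescaled covariance integral of the
solution of the stochastic fractional heat equation at scale `ρ` equals the covariance
integral at scale `1`, and the integrals are finite. -/
theorem stmt_0 (α H θ : ℝ) (hα₁ : 1 < α) (hα₂ : α ≤ 2)
    (hH₁ : (2 - α) / 2 < H) (hH₂ : H < 1)
    (hθ : θ = 1 / 2 - (1 - H) / α)
    (ρ : ℝ) (hρ : 0 < ρ) (s t : ℝ) (hs : 0 < s) (hst : s ≤ t) :
    IntegrableOn
      (fun p : ℝ × ℝ =>
        Real.exp (-(ρ * t + ρ * s - 2 * p.1) * |p.2| ^ α) * |p.2| ^ (1 - 2 * H))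
      (Set.Ioc 0 (ρ * s) ×ˢ Set.univ) ∧
    IntegrableOn
      (fun p : ℝ × ℝ =>
        Real.exp (-(t + s - 2 * p.1) * |p.2| ^ α) * |p.2| ^ (1 - 2 * H))
      (Set.Ioc 0 s ×ˢ Set.univ) ∧
    ρ ^ (-(2 * θ)) *
        ∫ r in Set.Ioc 0 (ρ * s), ∫ ξ : ℝ,
          Real.exp (-(ρ * t + ρ * s - 2 * r) * |ξ| ^ α) * |ξ| ^ (1 - 2 * H)
      = ∫ r in Set.Ioc 0 s, ∫ ξ : ℝ,
          Real.exp (-(t + s - 2 * r) * |ξ| ^ α) * |ξ| ^ (1 - 2 * H) :=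
  stmt_0_general α H θ hH₁ hH₂ hθ ρ hρ s t hs hst
end

section
/- For all reals 0 < a ≤ t, C_H · ∫_0^a ∫_ℝ exp(−2(t−s)|ξ|^α) |ξ|^{1−2H} dξ ds = c_{2,1} · (t^{2θ} − (t−a)^{2θ}), where c_{2,1} := (C_H/(2H+α−2)) · 2^{(2H+α−2)/α} · Γ((2−2H)/α). (This is the variance identity for the approximation error Y_n(t,x) = u(t,x) − u_n(t,x) with a = t_{n+1}.) -/
open MeasureTheory Real Set

/-- Variance identity for the approximation error `Y_n(t,x) = u(t,x) - u_n(t,x)`: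
for `α ∈ (1,2]`, `H ∈ ((2-α)/2, 1)`, `θ = 1/2 - (1-H)/α`,
`C_H = Γ(2H+1)·sin(πH)/(2π)` and
`c₂₁ = (C_H/(2H+α-2)) · 2^{(2H+α-2)/α} · Γ((2-2H)/α)`, one has for all `0 < a ≤ t` that
`C_H · ∫₀ᵃ ∫_ℝ exp(-2(t-s)|ξ|^α) |ξ|^{1-2H} dξ ds = c₂₁ · (t^{2θ} - (t-a)^{2θ})`. -/
theorem stmt_2 (α H θ C_H c21 : ℝ) (hα₁ : 1 < α) (hα₂ : α ≤ 2)
    (hH₁ : (2 - α) / 2 < H) (hH₂ : H < 1)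
    (hθ : θ = 1 / 2 - (1 - H) / α)
    (hC : C_H = Real.Gamma (2 * H + 1) * Real.sin (Real.pi * H) / (2 * Real.pi))
    (hc21 : c21 = C_H / (2 * H + α - 2) * 2 ^ ((2 * H + α - 2) / α)
      * Real.Gamma ((2 - 2 * H) / α))
    (a t : ℝ) (ha : 0 < a) (hat : a ≤ t) :
    C_H * ∫ s in Set.Ioc 0 a, ∫ ξ : ℝ,
        Real.exp (-2 * (t - s) * |ξ| ^ α) * |ξ| ^ (1 - 2 * H)
      = c21 * (t ^ (2 * θ) - (t - a) ^ (2 * θ)) := by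
  have hα0 : (0:ℝ) < α := by linarith
  have hq : (-1:ℝ) < 1 - 2 * H := by linarith
  have hθpos : 0 < 2 * θ := by
    have h1 : (1 - H) / α < 1 / 2 := by
      rw [div_lt_iff₀ hα0]; nlinarith
    rw [hθ]; linarith
  set r : ℝ := 2 * θ - 1 with hr
  have hr1 : (-1:ℝ) < r := by rw [hr]; linarith
  have hrexp : -(1 - 2 * H + 1) / α = r := by
    rw [hr, hθ]; field_simp; ring
  set C : ℝ := 2 ^ (2 * θ) / α * Real.Gamma ((2 - 2 * H) / α) with hCdef
  have inner : ∀ s ∈ Set.Ioo (0:ℝ) a,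
      (∫ ξ : ℝ, Real.exp (-2 * (t - s) * |ξ| ^ α) * |ξ| ^ (1 - 2 * H))
        = C * (t - s) ^ r := by
    intro s hs
    have hts : 0 < t - s := by
      have := hs.2; linarith
    have e : ∀ x : ℝ, Real.exp (-2 * (t - s) * x ^ α) * x ^ (1 - 2 * H)
        = x ^ (1 - 2 * H) * Real.exp (-(2 * (t - s)) * x ^ α) := fun x => by
      rw [show (-2 : ℝ) * (t - s) = -(2 * (t - s)) by ring, mul_comm]
    calc ∫ ξ : ℝ, Real.exp (-2 * (t - s) * |ξ| ^ α) * |ξ| ^ (1 - 2 * H)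
        = ∫ ξ : ℝ, (fun x => x ^ (1 - 2 * H) * Real.exp (-(2 * (t - s)) * x ^ α)) |ξ| := by
          congr 1; funext ξ; exact e |ξ|
      _ = 2 * ∫ x in Ioi (0:ℝ), x ^ (1 - 2 * H) * Real.exp (-(2 * (t - s)) * x ^ α) :=
          integral_comp_abs (f := fun x => x ^ (1 - 2 * H) * Real.exp (-(2 * (t - s)) * x ^ α))
      _ = 2 * ((2 * (t - s)) ^ (-(1 - 2 * H + 1) / α) * (1 / α)
            * Real.Gamma ((1 - 2 * H + 1) / α)) := by
          rw [integral_rpow_mul_exp_neg_mul_rpow hα0 hq (by positivity)]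
      _ = C * (t - s) ^ r := by
          rw [hrexp, show (1 - 2 * H + 1) / α = (2 - 2 * H) / α by ring_nf,
            Real.mul_rpow (by norm_num) hts.le, hCdef]
          rw [show (2:ℝ) * θ = 1 + r by rw [hr]; ring, Real.rpow_add (by norm_num),
            Real.rpow_one]
          ring
  have houter : (∫ s in Set.Ioc 0 a, ∫ ξ : ℝ,
      Real.exp (-2 * (t - s) * |ξ| ^ α) * |ξ| ^ (1 - 2 * H))
      = C * ((t ^ (r + 1) - (t - a) ^ (r + 1)) / (r + 1)) := by
    rw [MeasureTheory.integral_Ioc_eq_integral_Ioo,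
      MeasureTheory.setIntegral_congr_fun measurableSet_Ioo inner,
      ← MeasureTheory.integral_Ioc_eq_integral_Ioo,
      ← intervalIntegral.integral_of_le ha.le, intervalIntegral.integral_const_mul,
      intervalIntegral.integral_comp_sub_left (fun x => x ^ r) t,
      integral_rpow (Or.inl hr1)]
    rw [sub_zero]
  rw [houter]
  have hA : r + 1 = 2 * θ := by rw [hr]; ring
  have hB : (2 * H + α - 2) / α = 2 * θ := by rw [hθ]; field_simp; ring
  have hC2 : 2 * H + α - 2 = α * (2 * θ) := by
    rw [← hB]; field_simp
  rw [hA, hc21, hB, hC2, hCdef]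
  have h2θ : (2 * θ) ≠ 0 := ne_of_gt hθpos
  field_simp
end

section
/- Let β > 0 and t_n := exp(−n^{1+β}) for integers n ≥ 1. For every n ≥ 1 and every t ∈ [t_{n+1}, t_n], C_H · ∫_0^{t_{n+1}} ∫_ℝ exp(−2(t−s)|ξ|^α) |ξ|^{1−2H} dξ ds ≤ c_{2,1} · t_n^{2θ} · exp(−2θ(1+β)·n^β), where c_{2,1} := (C_H/(2H+α−2)) · 2^{(2H+α−2)/α} · Γ((2−2H)/α). (This is the bound on the canonical-metric diameter of the approximation error Y_n = u − u_n on [t_{n+1}, t_n].) -/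
open MeasureTheory Real Set

lemma my_add_rpow_le {a b q : ℝ} (ha : 0 ≤ a) (hb : 0 ≤ b) (hq0 : 0 ≤ q) (hq1 : q ≤ 1) :
    (a + b) ^ q ≤ a ^ q + b ^ q := by
  have h := NNReal.rpow_add_le_add_rpow a.toNNReal b.toNNReal hq0 hq1
  have h2 := NNReal.coe_le_coe.2 h
  rw [← Real.toNNReal_add ha hb] at h2
  simpa [NNReal.coe_rpow, Real.coe_toNNReal _ (by linarith : (0:ℝ) ≤ a + b),
    Real.coe_toNNReal _ ha, Real.coe_toNNReal _ hb] using h2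

set_option maxHeartbeats 800000

/-- Diameter bound for the approximation error `Y_n = u - u_n` on `[t_{n+1}, t_n]`, where
`t_n = exp(-n^{1+β})`: for `α ∈ (1,2]`, `H ∈ ((2-α)/2, 1)`, `θ = 1/2 - (1-H)/α`,
`C_H = Γ(2H+1)·sin(πH)/(2π)`, `c₂₁ = (C_H/(2H+α-2)) · 2^{(2H+α-2)/α} · Γ((2-2H)/α)`,
`β > 0`, `n ≥ 1` and `τ ∈ [t_{n+1}, t_n]`, one has
`C_H · ∫₀^{t_{n+1}} ∫_ℝ exp(-2(τ-s)|ξ|^α) |ξ|^{1-2H} dξ ds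
  ≤ c₂₁ · t_n^{2θ} · exp(-2θ(1+β)·n^β)`. -/
theorem stmt_3 (α H θ C_H c21 β : ℝ) (hα₁ : 1 < α) (hα₂ : α ≤ 2)
    (hH₁ : (2 - α) / 2 < H) (hH₂ : H < 1)
    (hθ : θ = 1 / 2 - (1 - H) / α)
    (hC : C_H = Real.Gamma (2 * H + 1) * Real.sin (Real.pi * H) / (2 * Real.pi))
    (hc21 : c21 = C_H / (2 * H + α - 2) * 2 ^ ((2 * H + α - 2) / α)
      * Real.Gamma ((2 - 2 * H) / α))
    (hβ : 0 < β)
    (t : ℕ → ℝ) (ht : ∀ n : ℕ, t n = Real.exp (-(n : ℝ) ^ (1 + β)))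
    (n : ℕ) (hn : 1 ≤ n) (τ : ℝ) (hτ : τ ∈ Set.Icc (t (n + 1)) (t n)) :
    C_H * ∫ s in Set.Ioc 0 (t (n + 1)), ∫ ξ : ℝ,
        Real.exp (-2 * (τ - s) * |ξ| ^ α) * |ξ| ^ (1 - 2 * H)
      ≤ c21 * (t n) ^ (2 * θ) * Real.exp (-(2 * θ * (1 + β) * (n : ℝ) ^ β)) := by
  have hα0 : (0:ℝ) < α := by linarith
  have hH0 : 0 < H := lt_of_le_of_lt (by linarith) hH₁
  set p : ℝ := (2 - 2 * H) / α with hp_def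
  have hp0 : 0 < p := div_pos (by linarith) hα0
  have hp1 : p < 1 := (div_lt_one hα0).2 (by linarith)
  have hθp : 2 * θ = 1 - p := by
    rw [hθ, hp_def]; field_simp
  have hCH : 0 < C_H := by
    rw [hC]
    apply div_pos
    · exact mul_pos (Real.Gamma_pos_of_pos (by linarith))
        (Real.sin_pos_of_pos_of_lt_pi (mul_pos Real.pi_pos hH0)
          (mul_lt_of_lt_one_right Real.pi_pos hH₂))
    · positivity
  have hΓp : 0 < Real.Gamma p := Real.Gamma_pos_of_pos hp0
  set T : ℝ := t (n + 1) with hT_def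
  have hT0 : 0 < T := by rw [hT_def, ht]; exact Real.exp_pos _
  have hTτ : T ≤ τ := hτ.1
  set K : ℝ := 2 * 2 ^ (-p) * (1 / α) * Real.Gamma p with hK_def
  have hK0 : 0 < K := by positivity
  -- inner integral computation
  have key : ∀ s : ℝ, s < τ →
      (∫ ξ : ℝ, Real.exp (-2 * (τ - s) * |ξ| ^ α) * |ξ| ^ (1 - 2 * H))
        = K * (τ - s) ^ (-p) := by
    intro s hs
    have hb : 0 < 2 * (τ - s) := by linarith
    have h1 : (∫ ξ : ℝ, Real.exp (-2 * (τ - s) * |ξ| ^ α) * |ξ| ^ (1 - 2 * H))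
        = 2 * ∫ x in Ioi (0:ℝ), Real.exp (-2 * (τ - s) * x ^ α) * x ^ (1 - 2 * H) :=
      integral_comp_abs (f := fun x => Real.exp (-2 * (τ - s) * x ^ α) * x ^ (1 - 2 * H))
    rw [h1]
    have h2 : ∫ x in Ioi (0:ℝ), Real.exp (-2 * (τ - s) * x ^ α) * x ^ (1 - 2 * H)
        = ∫ x in Ioi (0:ℝ), x ^ (1 - 2*H) * Real.exp (-(2*(τ-s)) * x ^ α) := by
      congr 1; ext x; rw [mul_comm]; ring_nf
    rw [h2, integral_rpow_mul_exp_neg_mul_rpow hα0 (by linarith) hb]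
    have he : -((1 - 2*H) + 1)/α = -p := by rw [hp_def]; ring
    have he2 : ((1 - 2*H) + 1)/α = p := by rw [hp_def]; ring
    rw [he, he2, Real.mul_rpow (by norm_num) (by linarith : (0:ℝ) ≤ τ - s)]
    rw [hK_def]; ring
  -- integrability of the majorant
  have hii : IntervalIntegrable (fun x : ℝ => (τ - x) ^ (-p)) volume 0 T := by
    have h := (intervalIntegral.intervalIntegrable_rpow'
      (show (-1:ℝ) < -p by linarith) (a := τ) (b := τ - T)).comp_sub_left τ
    simpa using h
  have hg_int : IntegrableOn (fun s : ℝ => (τ - s) ^ (-p)) (Ioc 0 T) :=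
    (intervalIntegrable_iff_integrableOn_Ioc_of_le hT0.le).mp hii
  -- monotone bound
  have hmono : (∫ s in Ioc 0 T, ∫ ξ : ℝ,
      Real.exp (-2 * (τ - s) * |ξ| ^ α) * |ξ| ^ (1 - 2 * H))
      ≤ ∫ s in Ioc 0 T, K * (τ - s) ^ (-p) := by
    apply integral_mono_of_nonneg
    · exact Filter.Eventually.of_forall fun s =>
        integral_nonneg fun ξ => by positivity
    · exact hg_int.const_mul K
    · have hne : ∀ᵐ s ∂(volume.restrict (Ioc 0 T)), s ≠ τ := by
        rw [Filter.eventually_iff, mem_ae_iff]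
        have h0 : {x : ℝ | x ≠ τ}ᶜ = {τ} := by ext x; simp
        rw [h0, Measure.restrict_apply (measurableSet_singleton τ)]
        exact measure_mono_null Set.inter_subset_left Real.volume_singleton
      filter_upwards [hne, ae_restrict_mem measurableSet_Ioc] with s hsτ hs
      have hsτ' : s < τ := lt_of_le_of_ne (le_trans hs.2 hTτ) hsτ
      rw [key s hsτ']
  -- compute the majorant integral
  have hcalc : (∫ s in Ioc 0 T, K * (τ - s) ^ (-p))
      = K * ((τ ^ (1 - p) - (τ - T) ^ (1 - p)) / (1 - p)) := by
    rw [integral_const_mul]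
    congr 1
    rw [← intervalIntegral.integral_of_le hT0.le,
      intervalIntegral.integral_comp_sub_left (fun x : ℝ => x ^ (-p)) τ,
      integral_rpow (Or.inl (by linarith : (-1:ℝ) < -p))]
    rw [sub_zero, show -p + 1 = 1 - p by ring]
  -- subadditivity bound
  have hsub : τ ^ (1 - p) - (τ - T) ^ (1 - p) ≤ T ^ (1 - p) := by
    have h := my_add_rpow_le (a := τ - T) (b := T) (q := 1 - p) (by linarith) hT0.le
      (by linarith) (by linarith)
    rw [sub_add_cancel] at h
    linarith
  have h1p : (0:ℝ) < 1 - p := by linarith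
  -- constant identity
  have hc : c21 = C_H * K / (1 - p) := by
    have h2 : (2:ℝ) ^ ((2 * H + α - 2) / α) = 2 * 2 ^ (-p) := by
      rw [show (2 * H + α - 2) / α = 1 + (-p) by rw [hp_def]; field_simp; ring,
        Real.rpow_add (by norm_num : (0:ℝ) < 2), Real.rpow_one]
    have h3 : 2 * H + α - 2 = α * (1 - p) := by rw [hp_def]; field_simp; ring
    rw [hc21, h2, h3, hK_def]
    field_simp
  have hc0 : 0 < c21 := by rw [hc]; positivity
  -- main chain
  have step1 : C_H * ∫ s in Ioc 0 T, ∫ ξ : ℝ,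
      Real.exp (-2 * (τ - s) * |ξ| ^ α) * |ξ| ^ (1 - 2 * H)
      ≤ c21 * T ^ (1 - p) := by
    calc C_H * ∫ s in Ioc 0 T, ∫ ξ : ℝ,
        Real.exp (-2 * (τ - s) * |ξ| ^ α) * |ξ| ^ (1 - 2 * H)
        ≤ C_H * (K * ((τ ^ (1 - p) - (τ - T) ^ (1 - p)) / (1 - p))) := by
          rw [← hcalc]; exact mul_le_mul_of_nonneg_left hmono hCH.le
      _ ≤ C_H * (K * (T ^ (1 - p) / (1 - p))) := by gcongr
      _ = c21 * T ^ (1 - p) := by rw [hc]; field_simp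
  -- time bound
  have step2 : T ^ (1 - p) ≤ (t n) ^ (2 * θ) * Real.exp (-(2 * θ * (1 + β) * (n : ℝ) ^ β)) := by
    rw [← hθp]
    have hn1 : (1:ℝ) ≤ (n:ℝ) := by exact_mod_cast hn
    have hn0 : (0:ℝ) < n := by linarith
    have hθ0 : 0 < 2 * θ := by rw [hθp]; linarith
    have hber : (n:ℝ) ^ (1+β) + (1+β) * (n:ℝ) ^ β ≤ ((n:ℝ)+1) ^ (1+β) := by
      have h := one_add_mul_self_le_rpow_one_add (s := (n:ℝ)⁻¹)
        (le_trans (by norm_num) (by positivity : (0:ℝ) ≤ (n:ℝ)⁻¹)) (by linarith : (1:ℝ) ≤ 1 + β)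
      have h2 : (n:ℝ) ^ (1+β) * (1 + (1+β) * (n:ℝ)⁻¹)
          ≤ (n:ℝ) ^ (1+β) * (1+(n:ℝ)⁻¹) ^ (1+β) :=
        mul_le_mul_of_nonneg_left h (Real.rpow_nonneg hn0.le _)
      have h3 : (n:ℝ) ^ (1+β) * (1+(n:ℝ)⁻¹) ^ (1+β) = ((n:ℝ)+1) ^ (1+β) := by
        rw [← Real.mul_rpow hn0.le (by positivity)]
        congr 1; field_simp
      have h4 : (n:ℝ) ^ (1+β) * (1 + (1+β) * (n:ℝ)⁻¹)
          = (n:ℝ) ^ (1+β) + (1+β) * (n:ℝ) ^ β := by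
        have hsplit : (n:ℝ) ^ (1+β) = (n:ℝ) * (n:ℝ) ^ β := by
          rw [Real.rpow_add hn0, Real.rpow_one]
        rw [hsplit]; field_simp
      rw [h4, h3] at h2
      exact h2
    rw [hT_def, ht, ht]
    push_cast
    rw [← Real.exp_mul, ← Real.exp_mul, ← Real.exp_add]
    apply Real.exp_le_exp.2
    linarith [mul_le_mul_of_nonneg_left hber hθ0.le]
  calc C_H * ∫ s in Ioc 0 T, ∫ ξ : ℝ,
      Real.exp (-2 * (τ - s) * |ξ| ^ α) * |ξ| ^ (1 - 2 * H)
      ≤ c21 * T ^ (1 - p) := step1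
    _ ≤ c21 * ((t n) ^ (2 * θ) * Real.exp (-(2 * θ * (1 + β) * (n : ℝ) ^ β))) :=
        mul_le_mul_of_nonneg_left step2 hc0.le
    _ = c21 * (t n) ^ (2 * θ) * Real.exp (-(2 * θ * (1 + β) * (n : ℝ) ^ β)) := by ring
end

section
/- There exists a constant c > 0 (depending only on α and H) such that for all reals 0 ≤ s ≤ t, C_H · [ ∫_0^s ∫_ℝ ( exp(−(t−r)|ξ|^α) − exp(−(s−r)|ξ|^α) )^2 |ξ|^{1−2H} dξ dr + ∫_s^t ∫_ℝ exp(−2(t−r)|ξ|^α) |ξ|^{1−2H} dξ dr ] ≤ c · (t−s)^{2θ}. (The left-hand side equals E[(u(t,x) − u(s,x))^2], so this is the temporal Hölder bound ‖u(t,x) − u(s,x)‖_{L²(Ω)} ≤ c_{2,2}|t−s|^θ of Proposition 2.1(b).) -/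
/-!
Put `p = 1 - 2H` and `β = (p + 1) / α`, so that `2θ = 1 - β ∈ (0, 1)`. The substitution
`ξ ↦ v^(-1/α) ξ` shows that `∫ e^{-v|ξ|^α} |ξ|^p dξ` is a constant times `v^(-β)`; this
evaluates the integral over `(s, t]` exactly as a constant times `(t - s)^(1 - β)`. In the
integral over `(0, s]` write `u = s - r` and `τ = t - s`: since
`(e^{-(u+τ)x} - e^{-ux})² ≤ e^{-2ux} min(1, τ²x²)`, the integrand is at most a constant times
`min(u^(-β), τ² u^(-β-2))`. Integrating this over all `u > 0`, split at `u = τ`, gives a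
constant times `τ^(1 - β)`, whatever the value of `s`.
-/

open MeasureTheory Real Set

lemma sq_exp_neg_sub_exp_neg (A B : ℝ) :
    (exp (-A) - exp (-B)) ^ 2 = exp (-(2 * B)) * (1 - exp (-(A - B))) ^ 2 := by
  have h : exp (-A) = exp (-B) * exp (-(A - B)) := by rw [← exp_add]; ring_nf
  have h2 : exp (-(2 * B)) = exp (-B) ^ 2 := by rw [← exp_nat_mul]; ring_nf
  rw [h, h2]; ring

lemma one_sub_exp_neg_nonneg {x : ℝ} (hx : 0 ≤ x) : 0 ≤ 1 - exp (-x) := by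
  simpa using exp_le_one_iff.2 (neg_nonpos.2 hx)

lemma sq_exp_neg_sub_exp_neg_le {A B : ℝ} (h : B ≤ A) :
    (exp (-A) - exp (-B)) ^ 2 ≤ exp (-(2 * B)) := by
  rw [sq_exp_neg_sub_exp_neg]
  refine mul_le_of_le_one_right (exp_pos _).le
    (pow_le_one₀ (one_sub_exp_neg_nonneg (sub_nonneg.2 h)) ?_)
  linarith [exp_pos (-(A - B))]

lemma sq_exp_neg_sub_exp_neg_le_mul_sq {A B : ℝ} (h : B ≤ A) :
    (exp (-A) - exp (-B)) ^ 2 ≤ exp (-(2 * B)) * (A - B) ^ 2 := by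
  rw [sq_exp_neg_sub_exp_neg]
  refine mul_le_mul_of_nonneg_left (pow_le_pow_left₀
    (one_sub_exp_neg_nonneg (sub_nonneg.2 h)) ?_ 2) (exp_pos _).le
  linarith [add_one_le_exp (-(A - B))]

lemma setIntegral_Iio_eq_setIntegral_Ioi_comp_sub_left {E : Type*} [NormedAddCommGroup E]
    [NormedSpace ℝ E] (f : ℝ → E) (s : ℝ) :
    ∫ r in Iio s, f r = ∫ u in Ioi 0, f (s - u) := by
  have h := (Measure.measurePreserving_sub_left volume s).setIntegral_preimage_emb
    (measurableEmbedding_subLeft s) f (Iio s)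
  rwa [show (fun u => s - u) ⁻¹' Iio s = Ioi 0 by ext; simp, eq_comm] at h

lemma integrableOn_Iio_iff_integrableOn_Ioi_comp_sub_left {E : Type*} [NormedAddCommGroup E]
    (f : ℝ → E) (s : ℝ) :
    IntegrableOn f (Iio s) ↔ IntegrableOn (fun u => f (s - u)) (Ioi 0) := by
  have h := (Measure.measurePreserving_sub_left volume s).integrableOn_comp_preimage
    (measurableEmbedding_subLeft s) (f := f) (s := Iio s)
  rwa [show (fun u => s - u) ⁻¹' Iio s = Ioi 0 by ext; simp, iff_comm] at h

lemma setIntegral_Ioc_eq_setIntegral_Ico_comp_sub_left {E : Type*} [NormedAddCommGroup E]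
    [NormedSpace ℝ E] (f : ℝ → E) (s t : ℝ) :
    ∫ r in Ioc s t, f r = ∫ u in Ico 0 (t - s), f (t - u) := by
  have h := (Measure.measurePreserving_sub_left volume t).setIntegral_preimage_emb
    (measurableEmbedding_subLeft t) f (Ioc s t)
  rwa [show (fun u => t - u) ⁻¹' Ioc s t = Ico 0 (t - s) by ext; simp [and_comm], eq_comm] at h

lemma integral_Ioc_rpow {γ : ℝ} (hγ : -1 < γ) {τ : ℝ} (hτ : 0 ≤ τ) :
    ∫ u in Ioc 0 τ, u ^ γ = τ ^ (γ + 1) / (γ + 1) := by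
  rw [← intervalIntegral.integral_of_le hτ, integral_rpow (Or.inl hγ),
    zero_rpow (by linarith), sub_zero]

lemma integrableOn_Ioc_rpow {γ : ℝ} (hγ : -1 < γ) (τ : ℝ) :
    IntegrableOn (fun u : ℝ => u ^ γ) (Ioc 0 τ) := by
  rw [integrableOn_Ioc_iff_integrableOn_Ioo]
  rcases le_or_gt τ 0 with h | h
  · simp [Ioo_eq_empty_of_le h]
  · exact (intervalIntegral.integrableOn_Ioo_rpow_iff h).2 hγ

section RpowBounds

variable {G : ℝ → ℝ} {β A B τ : ℝ}

lemma integrableOn_Ioi_of_le_rpow (hβ : -1 < β) (hβ' : β < 1) (hτ : 0 < τ)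
    (hG : AEStronglyMeasurable G (volume.restrict (Ioi 0))) (hG0 : ∀ u > 0, 0 ≤ G u)
    (hnear : ∀ u > 0, G u ≤ A * u ^ (-β)) (hfar : ∀ u > 0, G u ≤ B * τ ^ 2 * u ^ (-β - 2)) :
    IntegrableOn G (Ioi 0) := by
  have dom {S : Set ℝ} (hS : S ⊆ Ioi 0) (hSm : MeasurableSet S) {F : ℝ → ℝ}
      (hF : IntegrableOn F S) (hGF : ∀ u ∈ S, G u ≤ F u) : IntegrableOn G S := by
    refine hF.mono' (hG.mono_set hS) ?_
    filter_upwards [ae_restrict_mem hSm] with u hu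
    rw [norm_of_nonneg (hG0 u (hS hu))]
    exact hGF u hu
  rw [← Ioc_union_Ioi_eq_Ioi hτ.le]
  exact (dom Ioc_subset_Ioi_self measurableSet_Ioc
      ((integrableOn_Ioc_rpow (by linarith) τ).const_mul A) fun u hu => hnear u hu.1).union
    (dom (Ioi_subset_Ioi hτ.le) measurableSet_Ioi
      ((integrableOn_Ioi_rpow_of_lt (by linarith) hτ).const_mul (B * τ ^ 2))
      fun u hu => hfar u (hτ.trans hu))

lemma setIntegral_Ioi_le_of_le_rpow (hβ : -1 < β) (hβ' : β < 1) (hτ : 0 < τ)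
    (hG : AEStronglyMeasurable G (volume.restrict (Ioi 0))) (hG0 : ∀ u > 0, 0 ≤ G u)
    (hnear : ∀ u > 0, G u ≤ A * u ^ (-β)) (hfar : ∀ u > 0, G u ≤ B * τ ^ 2 * u ^ (-β - 2)) :
    ∫ u in Ioi 0, G u ≤ (A / (1 - β) + B / (β + 1)) * τ ^ (1 - β) := by
  have hint := integrableOn_Ioi_of_le_rpow hβ hβ' hτ hG hG0 hnear hfar
  rw [← Ioc_union_Ioi_eq_Ioi hτ.le, setIntegral_union Ioc_disjoint_Ioi_same measurableSet_Ioi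
    (hint.mono_set Ioc_subset_Ioi_self) (hint.mono_set (Ioi_subset_Ioi hτ.le))]
  have hnear_int : ∫ u in Ioc 0 τ, G u ≤ A / (1 - β) * τ ^ (1 - β) := by
    calc ∫ u in Ioc 0 τ, G u ≤ ∫ u in Ioc 0 τ, A * u ^ (-β) :=
          setIntegral_mono_on (hint.mono_set Ioc_subset_Ioi_self)
            ((integrableOn_Ioc_rpow (by linarith) τ).const_mul A) measurableSet_Ioc
            fun u hu => hnear u hu.1
      _ = A / (1 - β) * τ ^ (1 - β) := by
          rw [integral_const_mul, integral_Ioc_rpow (by linarith) hτ.le,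
            show -β + 1 = 1 - β by ring]
          ring
  have hfar_int : ∫ u in Ioi τ, G u ≤ B / (β + 1) * τ ^ (1 - β) := by
    calc ∫ u in Ioi τ, G u ≤ ∫ u in Ioi τ, B * τ ^ 2 * u ^ (-β - 2) :=
          setIntegral_mono_on (hint.mono_set (Ioi_subset_Ioi hτ.le))
            ((integrableOn_Ioi_rpow_of_lt (by linarith) hτ).const_mul _) measurableSet_Ioi
            fun u hu => hfar u (hτ.trans hu)
      _ = B / (β + 1) * τ ^ (1 - β) := by
          rw [integral_const_mul, integral_Ioi_rpow_of_lt (by linarith) hτ,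
            show -β - 2 + 1 = -(β + 1) by ring, show (1 - β) = 2 + -(β + 1) by ring,
            rpow_add hτ, rpow_two]
          field_simp
  linarith

end RpowBounds

noncomputable def expRpowMoment (α p v : ℝ) : ℝ := ∫ ξ : ℝ, exp (-v * |ξ| ^ α) * |ξ| ^ p

section Moments

variable {α p : ℝ}

lemma expRpowMoment_nonneg (v : ℝ) : 0 ≤ expRpowMoment α p v :=
  integral_nonneg fun _ => by positivity

lemma integrable_exp_neg_mul_abs_rpow_mul_abs_rpow_s4 (hα : 0 < α) (hp : -1 < p) {v : ℝ}
    (hv : 0 < v) : Integrable fun ξ : ℝ => exp (-v * |ξ| ^ α) * |ξ| ^ p := by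
  have hpos : IntegrableOn (fun ξ : ℝ => exp (-v * |ξ| ^ α) * |ξ| ^ p) (Ioi 0) :=
    (integrableOn_rpow_mul_exp_neg_mul_rpow hp hα hv).congr_fun
      (fun ξ hξ => by rw [abs_of_pos hξ, mul_comm]) measurableSet_Ioi
  have hneg : IntegrableOn (fun ξ : ℝ => exp (-v * |ξ| ^ α) * |ξ| ^ p) (Iio 0) := by
    rw [← (Measure.measurePreserving_neg (volume : Measure ℝ)).integrableOn_comp_preimage
      (Homeomorph.neg ℝ).measurableEmbedding]
    simpa only [Function.comp_def, abs_neg, neg_preimage, neg_Iio, neg_zero] using hpos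
  rw [← integrableOn_univ, ← Iio_union_Ici (a := 0), integrableOn_union,
    integrableOn_Ici_iff_integrableOn_Ioi]
  exact ⟨hneg, hpos⟩

lemma expRpowMoment_mul (hα : 0 < α) {v : ℝ} (hv : 0 < v) (b : ℝ) :
    expRpowMoment α p (v * b) = v ^ (-((p + 1) / α)) * expRpowMoment α p b := by
  set a : ℝ := v ^ (-α⁻¹)
  have ha : 0 < a := rpow_pos_of_pos hv _
  have haα : a ^ α = v⁻¹ := by
    rw [← rpow_mul hv.le, neg_mul, inv_mul_cancel₀ hα.ne', rpow_neg_one]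
  have hscale : ∀ ξ : ℝ, exp (-(v * b) * |a * ξ| ^ α) * |a * ξ| ^ p
      = a ^ p * (exp (-b * |ξ| ^ α) * |ξ| ^ p) := fun ξ => by
    rw [abs_mul, abs_of_pos ha, mul_rpow ha.le (abs_nonneg ξ), mul_rpow ha.le (abs_nonneg ξ),
      haα, show -(v * b) * (v⁻¹ * |ξ| ^ α) = -b * |ξ| ^ α by field_simp]
    ring
  have h := Measure.integral_comp_mul_left (fun ξ : ℝ => exp (-(v * b) * |ξ| ^ α) * |ξ| ^ p) a
  simp only [hscale, integral_const_mul, smul_eq_mul, abs_of_pos (inv_pos.2 ha)] at h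
  unfold expRpowMoment
  rw [eq_inv_mul_iff_mul_eq₀ ha.ne'] at h
  rw [← h, ← mul_assoc, show a * a ^ p = a ^ (p + 1) by rw [rpow_add ha, rpow_one, mul_comm],
    ← rpow_mul hv.le]
  congr 2
  ring

lemma integral_sq_exp_sub_exp_le (hα : 0 < α) (hp : -1 < p) {r s t : ℝ} (hrs : r < s)
    (hst : s ≤ t) :
    ∫ ξ : ℝ, (exp (-(t - r) * |ξ| ^ α) - exp (-(s - r) * |ξ| ^ α)) ^ 2 * |ξ| ^ p
      ≤ expRpowMoment α p 2 * (s - r) ^ (-((p + 1) / α)) := by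
  have hsr : 0 < s - r := sub_pos.2 hrs
  calc _ ≤ expRpowMoment α p ((s - r) * 2) := by
        refine integral_mono_of_nonneg (ae_of_all _ fun ξ => by positivity)
          (integrable_exp_neg_mul_abs_rpow_mul_abs_rpow_s4 hα hp (by positivity))
          (ae_of_all _ fun ξ => ?_)
        have hAB : (s - r) * |ξ| ^ α ≤ (t - r) * |ξ| ^ α :=
          mul_le_mul_of_nonneg_right (by linarith) (by positivity)
        have := sq_exp_neg_sub_exp_neg_le hAB
        rw [show -(2 * ((s - r) * |ξ| ^ α)) = -((s - r) * 2) * |ξ| ^ α by ring,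
          ← neg_mul, ← neg_mul] at this
        exact mul_le_mul_of_nonneg_right this (by positivity)
    _ = _ := by rw [expRpowMoment_mul hα hsr, mul_comm]

lemma integral_sq_exp_sub_exp_le_sq_mul (hα : 0 < α) (hp : -1 < p) {r s t : ℝ} (hrs : r < s)
    (hst : s ≤ t) :
    ∫ ξ : ℝ, (exp (-(t - r) * |ξ| ^ α) - exp (-(s - r) * |ξ| ^ α)) ^ 2 * |ξ| ^ p
      ≤ expRpowMoment α (p + 2 * α) 2 * (t - s) ^ 2 * (s - r) ^ (-((p + 1) / α) - 2) := by
  have hsr : 0 < s - r := sub_pos.2 hrs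
  calc _ ≤ ∫ ξ : ℝ, (t - s) ^ 2 * (exp (-((s - r) * 2) * |ξ| ^ α) * |ξ| ^ (p + 2 * α)) := by
        refine integral_mono_of_nonneg (ae_of_all _ fun ξ => by positivity)
          ((integrable_exp_neg_mul_abs_rpow_mul_abs_rpow_s4 hα (by linarith)
            (by positivity)).const_mul _)
          (ae_of_all _ fun ξ => ?_)
        dsimp only
        rcases eq_or_ne ξ 0 with rfl | hξ
        · calc _ = (0 : ℝ) := by simp [zero_rpow hα.ne']
            _ ≤ _ := by positivity
        have hAB : (s - r) * |ξ| ^ α ≤ (t - r) * |ξ| ^ α :=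
          mul_le_mul_of_nonneg_right (by linarith) (by positivity)
        have := sq_exp_neg_sub_exp_neg_le_mul_sq hAB
        have hpow : |ξ| ^ (p + 2 * α) = (|ξ| ^ α) ^ 2 * |ξ| ^ p := by
          rw [rpow_add (abs_pos.2 hξ), mul_comm 2 α, rpow_mul (abs_nonneg ξ), rpow_two, mul_comm]
        rw [show -(2 * ((s - r) * |ξ| ^ α)) = -((s - r) * 2) * |ξ| ^ α by ring,
          ← neg_mul, ← neg_mul, ← sub_mul, show t - r - (s - r) = t - s by ring] at this
        rw [hpow]
        calc _ ≤ exp (-((s - r) * 2) * |ξ| ^ α) * ((t - s) * |ξ| ^ α) ^ 2 * |ξ| ^ p :=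
              mul_le_mul_of_nonneg_right this (by positivity)
          _ = _ := by ring
    _ = (t - s) ^ 2 * expRpowMoment α (p + 2 * α) ((s - r) * 2) := integral_const_mul _ _
    _ = _ := by
        rw [expRpowMoment_mul hα hsr,
          show -((p + 2 * α + 1) / α) = -((p + 1) / α) - 2 by field_simp; ring]
        ring

lemma stronglyMeasurable_integral_sq_exp_sub_exp (α p s t : ℝ) :
    StronglyMeasurable fun r => ∫ ξ : ℝ,
      (exp (-(t - r) * |ξ| ^ α) - exp (-(s - r) * |ξ| ^ α)) ^ 2 * |ξ| ^ p :=
  (by fun_prop : Measurable fun q : ℝ × ℝ =>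
    (exp (-(t - q.1) * |q.2| ^ α) - exp (-(s - q.1) * |q.2| ^ α)) ^ 2 * |q.2| ^ p)
    |>.stronglyMeasurable.integral_prod_right'

end Moments

section Increments

variable {α p : ℝ}

lemma setIntegral_Ioc_integral_sq_exp_sub_exp_le (hp : -1 < p) (hpα : p + 1 < α) {s t : ℝ}
    (hst : s < t) (a : ℝ) :
    ∫ r in Ioc a s, ∫ ξ : ℝ,
        (exp (-(t - r) * |ξ| ^ α) - exp (-(s - r) * |ξ| ^ α)) ^ 2 * |ξ| ^ p
      ≤ (expRpowMoment α p 2 / (1 - (p + 1) / α)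
          + expRpowMoment α (p + 2 * α) 2 / ((p + 1) / α + 1)) * (t - s) ^ (1 - (p + 1) / α) := by
  set g : ℝ → ℝ := fun r => ∫ ξ : ℝ,
    (exp (-(t - r) * |ξ| ^ α) - exp (-(s - r) * |ξ| ^ α)) ^ 2 * |ξ| ^ p
  have hα : 0 < α := by linarith
  have hβ : -1 < (p + 1) / α := by linarith [div_pos (by linarith : 0 < p + 1) hα]
  have hβ' : (p + 1) / α < 1 := (div_lt_one hα).2 hpα
  have hg0 : ∀ r, 0 ≤ g r := fun r => integral_nonneg fun ξ => by positivity
  have hG : AEStronglyMeasurable (fun u => g (s - u)) (volume.restrict (Ioi 0)) :=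
    ((stronglyMeasurable_integral_sq_exp_sub_exp α p s t).measurable.comp
      (measurable_const.sub measurable_id)).aestronglyMeasurable
  have hnear : ∀ u > 0, g (s - u) ≤ expRpowMoment α p 2 * u ^ (-((p + 1) / α)) :=
    fun u hu => (integral_sq_exp_sub_exp_le hα hp (sub_lt_self s hu) hst.le).trans_eq
      (by rw [sub_sub_cancel])
  have hfar : ∀ u > 0, g (s - u)
      ≤ expRpowMoment α (p + 2 * α) 2 * (t - s) ^ 2 * u ^ (-((p + 1) / α) - 2) :=
    fun u hu => (integral_sq_exp_sub_exp_le_sq_mul hα hp (sub_lt_self s hu) hst.le).trans_eq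
      (by rw [sub_sub_cancel])
  have hint : IntegrableOn g (Iio s) :=
    (integrableOn_Iio_iff_integrableOn_Ioi_comp_sub_left g s).2 <|
      integrableOn_Ioi_of_le_rpow hβ hβ' (sub_pos.2 hst) hG (fun u _ => hg0 _) hnear hfar
  calc ∫ r in Ioc a s, g r ≤ ∫ r in Iio s, g r :=
        setIntegral_mono_set hint (ae_of_all _ hg0)
          (Ioc_subset_Iic_self.eventuallyLE.trans Iio_ae_eq_Iic.symm.le)
    _ = ∫ u in Ioi 0, g (s - u) := setIntegral_Iio_eq_setIntegral_Ioi_comp_sub_left g s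
    _ ≤ _ := setIntegral_Ioi_le_of_le_rpow hβ hβ' (sub_pos.2 hst) hG (fun u _ => hg0 _)
        hnear hfar

lemma setIntegral_Ioc_integral_exp_eq (hp : -1 < p) (hpα : p + 1 < α) {s t : ℝ} (hst : s ≤ t) :
    ∫ r in Ioc s t, ∫ ξ : ℝ, exp (-2 * (t - r) * |ξ| ^ α) * |ξ| ^ p
      = expRpowMoment α p 2 / (1 - (p + 1) / α) * (t - s) ^ (1 - (p + 1) / α) := by
  have hα : 0 < α := by linarith
  have hscale : ∀ u ∈ Ioo 0 (t - s), ∫ ξ : ℝ, exp (-2 * u * |ξ| ^ α) * |ξ| ^ p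
      = expRpowMoment α p 2 * u ^ (-((p + 1) / α)) := fun u hu => by
    rw [mul_comm (expRpowMoment α p 2), ← expRpowMoment_mul hα hu.1, expRpowMoment]
    simp only [neg_mul, mul_comm 2 u]
  rw [setIntegral_Ioc_eq_setIntegral_Ico_comp_sub_left, integral_Ico_eq_integral_Ioo]
  simp only [sub_sub_cancel]
  rw [setIntegral_congr_fun measurableSet_Ioo hscale, ← integral_Ioc_eq_integral_Ioo,
    integral_const_mul,
    integral_Ioc_rpow (by linarith [(div_lt_one hα).2 hpα]) (sub_nonneg.2 hst),
    show -((p + 1) / α) + 1 = 1 - (p + 1) / α by ring]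
  ring

theorem exists_integral_increment_le (hp : -1 < p) (hpα : p + 1 < α) :
    ∃ c > (0 : ℝ), ∀ s t : ℝ, s ≤ t →
      (∫ r in Ioc 0 s, ∫ ξ : ℝ,
          (exp (-(t - r) * |ξ| ^ α) - exp (-(s - r) * |ξ| ^ α)) ^ 2 * |ξ| ^ p)
        + ∫ r in Ioc s t, ∫ ξ : ℝ, exp (-2 * (t - r) * |ξ| ^ α) * |ξ| ^ p
      ≤ c * (t - s) ^ (1 - (p + 1) / α) := by
  set β := (p + 1) / α
  set M₁ := expRpowMoment α p 2
  set M₂ := expRpowMoment α (p + 2 * α) 2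
  have hβ : 0 < β := div_pos (by linarith) (by linarith)
  have hβ' : β < 1 := (div_lt_one (by linarith)).2 hpα
  have hM₁ : 0 ≤ M₁ := expRpowMoment_nonneg 2
  have hM₂ : 0 ≤ M₂ := expRpowMoment_nonneg 2
  refine ⟨2 * M₁ / (1 - β) + M₂ / (β + 1) + 1, ?_, fun s t hst => ?_⟩
  · have : 0 < 1 - β := by linarith
    positivity
  rcases hst.eq_or_lt with rfl | hst
  · simp [zero_rpow (by linarith : 1 - β ≠ 0)]
  have hτ : 0 ≤ (t - s) ^ (1 - β) := rpow_nonneg (sub_nonneg.2 hst.le) _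
  rw [setIntegral_Ioc_integral_exp_eq hp hpα hst.le]
  calc _ ≤ (M₁ / (1 - β) + M₂ / (β + 1)) * (t - s) ^ (1 - β)
        + M₁ / (1 - β) * (t - s) ^ (1 - β) :=
        add_le_add (setIntegral_Ioc_integral_sq_exp_sub_exp_le hp hpα hst 0) le_rfl
    _ = (2 * M₁ / (1 - β) + M₂ / (β + 1)) * (t - s) ^ (1 - β) := by ring
    _ ≤ _ := by linarith

end Increments

theorem stmt_4_general (α H θ C_H : ℝ)
    (hH₁ : (2 - α) / 2 < H) (hH₂ : H < 1)
    (hθ : θ = 1 / 2 - (1 - H) / α) :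
    ∃ c > (0 : ℝ), ∀ s t : ℝ, 0 ≤ s → s ≤ t →
      C_H * ((∫ r in Set.Ioc 0 s, ∫ ξ : ℝ,
          (Real.exp (-(t - r) * |ξ| ^ α) - Real.exp (-(s - r) * |ξ| ^ α)) ^ 2
            * |ξ| ^ (1 - 2 * H))
        + ∫ r in Set.Ioc s t, ∫ ξ : ℝ,
          Real.exp (-2 * (t - r) * |ξ| ^ α) * |ξ| ^ (1 - 2 * H))
      ≤ c * (t - s) ^ (2 * θ) := by
  obtain ⟨c, hc, hbound⟩ :=
    exists_integral_increment_le (α := α) (p := 1 - 2 * H) (by linarith) (by linarith)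
  have hexp : 1 - (1 - 2 * H + 1) / α = 2 * θ := by
    rw [hθ]; field_simp [(by linarith : α ≠ 0)]; ring
  refine ⟨(|C_H| + 1) * c, by positivity, fun s t _ hst => ?_⟩
  have hX := hbound s t hst
  rw [hexp] at hX
  have hX0 : 0 ≤ (∫ r in Ioc 0 s, ∫ ξ : ℝ,
        (exp (-(t - r) * |ξ| ^ α) - exp (-(s - r) * |ξ| ^ α)) ^ 2 * |ξ| ^ (1 - 2 * H))
      + ∫ r in Ioc s t, ∫ ξ : ℝ, exp (-2 * (t - r) * |ξ| ^ α) * |ξ| ^ (1 - 2 * H) := by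
    positivity
  calc _ ≤ (|C_H| + 1) * _ := mul_le_mul_of_nonneg_right (by linarith [le_abs_self C_H]) hX0
    _ ≤ (|C_H| + 1) * (c * (t - s) ^ (2 * θ)) := by gcongr
    _ = _ := by ring

/-- Temporal Hölder bound `‖u(t,x) - u(s,x)‖_{L²(Ω)} ≤ c·|t-s|^θ`: for `α ∈ (1,2]`,
`H ∈ ((2-α)/2, 1)`, `θ = 1/2 - (1-H)/α` and `C_H = Γ(2H+1)·sin(πH)/(2π)`, there is a
constant `c > 0` such that for all `0 ≤ s ≤ t`,
`C_H · [∫₀ˢ ∫_ℝ (e^{-(t-r)|ξ|^α} - e^{-(s-r)|ξ|^α})² |ξ|^{1-2H} dξ dr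
  + ∫ₛᵗ ∫_ℝ e^{-2(t-r)|ξ|^α} |ξ|^{1-2H} dξ dr] ≤ c·(t-s)^{2θ}`. -/
theorem stmt_4 (α H θ C_H : ℝ) (hα₁ : 1 < α) (hα₂ : α ≤ 2)
    (hH₁ : (2 - α) / 2 < H) (hH₂ : H < 1)
    (hθ : θ = 1 / 2 - (1 - H) / α)
    (hC : C_H = Real.Gamma (2 * H + 1) * Real.sin (Real.pi * H) / (2 * Real.pi)) :
    ∃ c > (0 : ℝ), ∀ s t : ℝ, 0 ≤ s → s ≤ t →
      C_H * ((∫ r in Set.Ioc 0 s, ∫ ξ : ℝ,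
          (Real.exp (-(t - r) * |ξ| ^ α) - Real.exp (-(s - r) * |ξ| ^ α)) ^ 2
            * |ξ| ^ (1 - 2 * H))
        + ∫ r in Set.Ioc s t, ∫ ξ : ℝ,
          Real.exp (-2 * (t - r) * |ξ| ^ α) * |ξ| ^ (1 - 2 * H))
      ≤ c * (t - s) ^ (2 * θ) :=
  stmt_4_general α H θ C_H hH₁ hH₂ hθ
end

section
/- There exists a constant c > 0 (depending only on α and H) such that for all reals 0 ≤ a ≤ s ≤ t, C_H · ∫_0^a ∫_ℝ ( exp(−(t−r)|ξ|^α) − exp(−(s−r)|ξ|^α) )^2 |ξ|^{1−2H} dξ dr ≤ c · (t−s)^{2θ}. (The left-hand side equals E[(Y_n(t,x) − Y_n(s,x))^2] with a = t_{n+1}, where Y_n = u − u_n is the approximation error; this is the canonical-metric increment bound for Y_n.) -/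
/-!
Write `δ = t - s` and `x = |ξ|^α`. The integrand factors as
`e^{-2(s-r)x} (1 - e^{-δx})² |ξ|^{1-2H}`, and since `r ≤ a ≤ s` the `r`-integral of
`e^{-2(s-r)x}` is at most `1/(2x)`. What remains is `∫ (1 - e^{-δ|ξ|^α})² |ξ|^{1-2H-α} dξ`;
splitting it at `|ξ| = δ^{-1/α}` and using `(1 - e^{-y})² ≤ min(y², 1)` leaves two power
integrals, each a constant multiple of `δ^{(α-2+2H)/α} = δ^{2θ}`.
-/

open MeasureTheory Real Set
open scoped ENNReal

theorem integral_integral_le_of_lintegral_enorm_le {X Y : Type*} [MeasurableSpace X]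
    [MeasurableSpace Y] {μ : Measure X} {ν : Measure Y} {f : X → Y → ℝ} {B : ℝ} (hB₀ : 0 ≤ B)
    (hB : ∫⁻ x, ∫⁻ y, ‖f x y‖ₑ ∂ν ∂μ ≤ ENNReal.ofReal B) :
    ∫ x, ∫ y, f x y ∂ν ∂μ ≤ B :=
  calc ∫ x, ∫ y, f x y ∂ν ∂μ ≤ ‖∫ x, ∫ y, f x y ∂ν ∂μ‖ₑ.toReal := by
        rw [toReal_enorm]; exact le_norm_self _
    _ ≤ B := ENNReal.toReal_le_of_le_ofReal hB₀ <| (enorm_integral_le_lintegral_enorm _).trans <|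
        (lintegral_mono fun _ ↦ enorm_integral_le_lintegral_enorm _).trans hB

theorem lintegral_comp_abs (f : ℝ → ℝ≥0∞) : ∫⁻ x, f |x| = 2 * ∫⁻ x in Ioi 0, f x := by
  have hIoi : ∫⁻ x in Ioi 0, f |x| = ∫⁻ x in Ioi 0, f x :=
    setLIntegral_congr_fun measurableSet_Ioi fun x hx ↦ by rw [abs_of_pos hx]
  have hIic : ∫⁻ x in Iic 0, f |x| = ∫⁻ x in Ioi 0, f x := by
    rw [← hIoi, setLIntegral_congr Ioi_ae_eq_Ici]
    have := (Measure.measurePreserving_neg (volume : Measure ℝ)).setLIntegral_comp_preimage_emb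
      (Homeomorph.neg ℝ).measurableEmbedding (fun x ↦ f |x|) (Iic 0)
    simpa using this.symm
  rw [← lintegral_add_compl _ measurableSet_Iic, compl_Iic, hIic, hIoi, two_mul]

theorem lintegral_Iic_exp_neg_mul_sub {c : ℝ} (hc : 0 < c) (s : ℝ) :
    ∫⁻ r in Iic s, ENNReal.ofReal (exp (-(c * (s - r)))) = ENNReal.ofReal c⁻¹ := by
  have hsplit : ∀ r, exp (-(c * (s - r))) = exp (c * r) * exp (-(c * s)) := fun r ↦ by
    rw [← exp_add]; ring_nf
  simp_rw [hsplit]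
  rw [← ofReal_integral_eq_lintegral_ofReal ((integrableOn_exp_mul_Iic hc s).mul_const _)
    (ae_of_all _ fun r ↦ by positivity), integral_mul_const, integral_exp_mul_Iic hc,
    div_mul_eq_mul_div, ← exp_add, add_neg_cancel, exp_zero, one_div]

theorem lintegral_Ioc_rpow {m R : ℝ} (hm : -1 < m) (hR : 0 ≤ R) :
    ∫⁻ x in Ioc 0 R, ENNReal.ofReal (x ^ m) = ENNReal.ofReal (R ^ (m + 1) / (m + 1)) := by
  rw [← ofReal_integral_eq_lintegral_ofReal
    ((intervalIntegrable_iff_integrableOn_Ioc_of_le hR).mp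
      (intervalIntegral.intervalIntegrable_rpow' hm))
    ((ae_restrict_mem measurableSet_Ioc).mono fun x hx ↦ rpow_nonneg hx.1.le m),
    ← intervalIntegral.integral_of_le hR, integral_rpow (Or.inl hm),
    zero_rpow (by linarith), sub_zero]

theorem lintegral_Ioi_rpow {q R : ℝ} (hq : q < -1) (hR : 0 < R) :
    ∫⁻ x in Ioi R, ENNReal.ofReal (x ^ q) = ENNReal.ofReal (-R ^ (q + 1) / (q + 1)) := by
  rw [← ofReal_integral_eq_lintegral_ofReal (integrableOn_Ioi_rpow_of_lt hq hR)
    ((ae_restrict_mem measurableSet_Ioi).mono fun x hx ↦ rpow_nonneg (hR.trans hx).le q),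
    integral_Ioi_rpow_of_lt hq hR]

theorem one_sub_exp_neg_sq_le_sq {y : ℝ} (hy : 0 ≤ y) : (1 - exp (-y)) ^ 2 ≤ y ^ 2 := by
  have h₁ : 0 ≤ 1 - exp (-y) := by simpa using exp_le_one_iff.mpr (neg_nonpos.mpr hy)
  have h₂ : 1 - exp (-y) ≤ y := by linarith [one_sub_le_exp_neg y]
  gcongr

theorem one_sub_exp_neg_sq_le_one {y : ℝ} (hy : 0 ≤ y) : (1 - exp (-y)) ^ 2 ≤ 1 := by
  have h₁ : 0 ≤ 1 - exp (-y) := by simpa using exp_le_one_iff.mpr (neg_nonpos.mpr hy)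
  have h₂ : 1 - exp (-y) ≤ 1 := by linarith [exp_pos (-y)]
  nlinarith

theorem one_sub_exp_neg_sq_mul_rpow_le_sq_mul_rpow {α δ q y : ℝ} (hδ : 0 ≤ δ) (hy : 0 < y) :
    (1 - exp (-(δ * y ^ α))) ^ 2 * y ^ q ≤ δ ^ 2 * y ^ (q + 2 * α) := by
  have hpow : y ^ (q + 2 * α) = y ^ α * y ^ α * y ^ q := by
    rw [← rpow_add hy, ← rpow_add hy]; ring_nf
  calc (1 - exp (-(δ * y ^ α))) ^ 2 * y ^ q ≤ (δ * y ^ α) ^ 2 * y ^ q := by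
        gcongr ?_ * _
        exact one_sub_exp_neg_sq_le_sq (by positivity)
    _ = δ ^ 2 * y ^ (q + 2 * α) := by rw [hpow]; ring

theorem one_sub_exp_neg_sq_mul_rpow_le_rpow {α δ q y : ℝ} (hδ : 0 ≤ δ) (hy : 0 < y) :
    (1 - exp (-(δ * y ^ α))) ^ 2 * y ^ q ≤ y ^ q :=
  mul_le_of_le_one_left (by positivity) (one_sub_exp_neg_sq_le_one (by positivity))

theorem lintegral_Ioi_one_sub_exp_neg_sq_mul_rpow_le {α q δ : ℝ} (hα : 0 < α) (hq : q < -1)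
    (hq' : -1 < q + 2 * α) (hδ : 0 ≤ δ) :
    ∫⁻ y in Ioi 0, ENNReal.ofReal ((1 - exp (-(δ * y ^ α))) ^ 2 * y ^ q)
      ≤ ENNReal.ofReal ((1 / (q + 2 * α + 1) - 1 / (q + 1)) * δ ^ (-(q + 1) / α)) := by
  rcases hδ.eq_or_lt with rfl | hδ
  · simp
  set R := δ ^ (-1 / α) with hR
  have hR₀ : 0 < R := by positivity
  have hRpow : ∀ x, R ^ x = δ ^ (-x / α) := fun x ↦ by rw [hR, ← rpow_mul hδ.le]; ring_nf
  calc ∫⁻ y in Ioi 0, ENNReal.ofReal ((1 - exp (-(δ * y ^ α))) ^ 2 * y ^ q)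
      = (∫⁻ y in Ioc 0 R, ENNReal.ofReal ((1 - exp (-(δ * y ^ α))) ^ 2 * y ^ q))
        + ∫⁻ y in Ioi R, ENNReal.ofReal ((1 - exp (-(δ * y ^ α))) ^ 2 * y ^ q) := by
        rw [← lintegral_union measurableSet_Ioi (Ioc_disjoint_Ioi le_rfl),
          Ioc_union_Ioi_eq_Ioi hR₀.le]
    _ ≤ (∫⁻ y in Ioc 0 R, ENNReal.ofReal (δ ^ 2) * ENNReal.ofReal (y ^ (q + 2 * α)))
        + ∫⁻ y in Ioi R, ENNReal.ofReal (y ^ q) := by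
        refine add_le_add (setLIntegral_mono' measurableSet_Ioc fun y hy ↦ ?_)
          (setLIntegral_mono' measurableSet_Ioi fun y hy ↦ ENNReal.ofReal_le_ofReal
            (one_sub_exp_neg_sq_mul_rpow_le_rpow hδ.le (hR₀.trans hy)))
        rw [← ENNReal.ofReal_mul (sq_nonneg δ)]
        exact ENNReal.ofReal_le_ofReal (one_sub_exp_neg_sq_mul_rpow_le_sq_mul_rpow hδ.le hy.1)
    _ = ENNReal.ofReal (δ ^ 2 * (R ^ (q + 2 * α + 1) / (q + 2 * α + 1)))
        + ENNReal.ofReal (-R ^ (q + 1) / (q + 1)) := by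
        rw [lintegral_const_mul' _ _ ENNReal.ofReal_ne_top, lintegral_Ioc_rpow hq' hR₀.le,
          lintegral_Ioi_rpow hq hR₀, ENNReal.ofReal_mul (sq_nonneg δ)]
    _ = ENNReal.ofReal ((1 / (q + 2 * α + 1) - 1 / (q + 1)) * δ ^ (-(q + 1) / α)) := by
        have hq₁ : q + 1 < 0 := by linarith
        have hq₂ : 0 < q + 2 * α + 1 := by linarith
        rw [← ENNReal.ofReal_add (by positivity)
          (div_nonneg_of_nonpos (by simpa using (rpow_pos_of_pos hR₀ _).le) hq₁.le)]
        have hδpow : δ ^ 2 * δ ^ (-(q + 2 * α + 1) / α) = δ ^ (-(q + 1) / α) := by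
          rw [← rpow_natCast, ← rpow_add hδ]
          congr 1
          field_simp
          ring
        rw [hRpow, hRpow, ← mul_div_assoc, hδpow]
        congr 1
        ring

theorem lintegral_Ioc_sq_exp_sub_le {a s x : ℝ} (hx : 0 < x) (has : a ≤ s) (t : ℝ) :
    ∫⁻ r in Ioc 0 a, ENNReal.ofReal ((exp (-(t - r) * x) - exp (-(s - r) * x)) ^ 2)
      ≤ ENNReal.ofReal ((1 - exp (-((t - s) * x))) ^ 2 / (2 * x)) := by
  have hfactor : ∀ r, (exp (-(t - r) * x) - exp (-(s - r) * x)) ^ 2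
      = exp (-(2 * x * (s - r))) * (1 - exp (-((t - s) * x))) ^ 2 := fun r ↦ by
    have hshift : exp (-(t - r) * x) = exp (-(s - r) * x) * exp (-((t - s) * x)) := by
      rw [← exp_add]; ring_nf
    have hsq : exp (-(2 * x * (s - r))) = exp (-(s - r) * x) ^ 2 := by
      rw [sq, ← exp_add]; ring_nf
    rw [hshift, hsq]; ring
  simp_rw [hfactor, ENNReal.ofReal_mul (exp_pos _).le]
  rw [lintegral_mul_const' _ _ ENNReal.ofReal_ne_top, div_eq_inv_mul,
    ENNReal.ofReal_mul (by positivity), ← lintegral_Iic_exp_neg_mul_sub (by positivity) s]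
  gcongr ?_ * _
  exact lintegral_mono_set fun r hr ↦ hr.2.trans has

theorem lintegral_Ioc_sq_exp_sub_mul_rpow_le {α p a s y : ℝ} (hα : 0 < α) (hy : 0 ≤ y)
    (has : a ≤ s) (t : ℝ) :
    ∫⁻ r in Ioc 0 a, ENNReal.ofReal ((exp (-(t - r) * y ^ α) - exp (-(s - r) * y ^ α)) ^ 2 * y ^ p)
      ≤ ENNReal.ofReal ((1 - exp (-((t - s) * y ^ α))) ^ 2 * y ^ (p - α) / 2) := by
  rcases hy.eq_or_lt with rfl | hy
  · simp [zero_rpow hα.ne']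
  have hyα : 0 < y ^ α := rpow_pos_of_pos hy α
  simp_rw [ENNReal.ofReal_mul (sq_nonneg _)]
  rw [lintegral_mul_const' _ _ ENNReal.ofReal_ne_top]
  calc _ ≤ ENNReal.ofReal ((1 - exp (-((t - s) * y ^ α))) ^ 2 / (2 * y ^ α))
        * ENNReal.ofReal (y ^ p) := by gcongr; exact lintegral_Ioc_sq_exp_sub_le hyα has t
    _ = _ := by
        rw [← ENNReal.ofReal_mul (by positivity), rpow_sub hy]
        congr 1
        field_simp

theorem lintegral_Ioc_lintegral_sq_exp_sub_mul_rpow_abs_le {α p a s t : ℝ} (hα : 0 < α)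
    (hp₁ : -1 - α < p) (hp₂ : p < α - 1) (has : a ≤ s) (hst : s ≤ t) :
    ∫⁻ r in Ioc 0 a, ∫⁻ ξ, ENNReal.ofReal
        ((exp (-(t - r) * |ξ| ^ α) - exp (-(s - r) * |ξ| ^ α)) ^ 2 * |ξ| ^ p)
      ≤ ENNReal.ofReal ((1 / (p + α + 1) + 1 / (α - 1 - p)) * (t - s) ^ ((α - 1 - p) / α)) := by
  rw [lintegral_lintegral_swap (Measurable.aemeasurable (by fun_prop))]
  calc _ ≤ ∫⁻ ξ, ENNReal.ofReal ((1 - exp (-((t - s) * |ξ| ^ α))) ^ 2 * |ξ| ^ (p - α) / 2) :=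
        lintegral_mono fun ξ ↦ lintegral_Ioc_sq_exp_sub_mul_rpow_le hα (abs_nonneg ξ) has t
    _ = ∫⁻ y in Ioi 0, ENNReal.ofReal ((1 - exp (-((t - s) * y ^ α))) ^ 2 * y ^ (p - α)) := by
        rw [lintegral_comp_abs (fun y ↦ ENNReal.ofReal
          ((1 - exp (-((t - s) * y ^ α))) ^ 2 * y ^ (p - α) / 2))]
        simp_rw [ENNReal.ofReal_div_of_pos two_pos, ENNReal.ofReal_ofNat, ENNReal.div_eq_inv_mul]
        rw [lintegral_const_mul' _ _ (by simp), ← mul_assoc,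
          ENNReal.mul_inv_cancel two_ne_zero ENNReal.ofNat_ne_top, one_mul]
    _ ≤ _ := lintegral_Ioi_one_sub_exp_neg_sq_mul_rpow_le hα (by linarith) (by linarith)
          (sub_nonneg.mpr hst)
    _ = _ := by
        rw [show p - α + 2 * α + 1 = p + α + 1 by ring, show p - α + 1 = -(α - 1 - p) by ring,
          neg_neg, one_div_neg_eq_neg_one_div, sub_neg_eq_add]

theorem integral_Ioc_integral_sq_exp_sub_mul_rpow_abs_le {α p a s t : ℝ} (hα : 0 < α)
    (hp₁ : -1 - α < p) (hp₂ : p < α - 1) (has : a ≤ s) (hst : s ≤ t) :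
    ∫ r in Ioc 0 a, ∫ ξ, (exp (-(t - r) * |ξ| ^ α) - exp (-(s - r) * |ξ| ^ α)) ^ 2 * |ξ| ^ p
      ≤ (1 / (p + α + 1) + 1 / (α - 1 - p)) * (t - s) ^ ((α - 1 - p) / α) := by
  have hp₁' : 0 < p + α + 1 := by linarith
  have hp₂' : 0 < α - 1 - p := by linarith
  have hst' : 0 ≤ t - s := sub_nonneg.mpr hst
  refine integral_integral_le_of_lintegral_enorm_le (by positivity) ?_
  simpa only [Real.enorm_of_nonneg (mul_nonneg (sq_nonneg _) (rpow_nonneg (abs_nonneg _) p))]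
    using lintegral_Ioc_lintegral_sq_exp_sub_mul_rpow_abs_le hα hp₁ hp₂ has hst

theorem stmt_5_general (α H θ C_H : ℝ) (hα₁ : 1 < α)
    (hH₁ : (2 - α) / 2 < H) (hH₂ : H < 1)
    (hθ : θ = 1 / 2 - (1 - H) / α) :
    ∃ c > (0 : ℝ), ∀ a s t : ℝ, 0 ≤ a → a ≤ s → s ≤ t →
      C_H * (∫ r in Set.Ioc 0 a, ∫ ξ : ℝ,
          (Real.exp (-(t - r) * |ξ| ^ α) - Real.exp (-(s - r) * |ξ| ^ α)) ^ 2
            * |ξ| ^ (1 - 2 * H))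
      ≤ c * (t - s) ^ (2 * θ) := by
  have hα : 0 < α := by linarith
  set K := 1 / (1 - 2 * H + α + 1) + 1 / (α - 1 - (1 - 2 * H))
  have hK : 0 < K := by
    have h₁ : 0 < 1 - 2 * H + α + 1 := by linarith
    have h₂ : 0 < α - 1 - (1 - 2 * H) := by linarith
    positivity
  refine ⟨|C_H| * K + 1, by positivity, fun a s t _ has hst ↦ ?_⟩
  have h2θ : 2 * θ = (α - 1 - (1 - 2 * H)) / α := by rw [hθ]; field_simp; ring
  have hI := integral_Ioc_integral_sq_exp_sub_mul_rpow_abs_le (p := 1 - 2 * H) hα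
    (by linarith) (by linarith) has hst
  have hI₀ : 0 ≤ ∫ r in Ioc 0 a, ∫ ξ : ℝ,
      (exp (-(t - r) * |ξ| ^ α) - exp (-(s - r) * |ξ| ^ α)) ^ 2 * |ξ| ^ (1 - 2 * H) :=
    integral_nonneg fun r ↦ integral_nonneg fun ξ ↦ by positivity
  have hpow : 0 ≤ (t - s) ^ ((α - 1 - (1 - 2 * H)) / α) := rpow_nonneg (sub_nonneg.mpr hst) _
  rw [h2θ]
  calc _ ≤ |C_H| * ∫ r in Ioc 0 a, ∫ ξ : ℝ,
        (exp (-(t - r) * |ξ| ^ α) - exp (-(s - r) * |ξ| ^ α)) ^ 2 * |ξ| ^ (1 - 2 * H) :=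
        mul_le_mul_of_nonneg_right (le_abs_self C_H) hI₀
    _ ≤ |C_H| * (K * (t - s) ^ ((α - 1 - (1 - 2 * H)) / α)) := by gcongr
    _ ≤ (|C_H| * K + 1) * (t - s) ^ ((α - 1 - (1 - 2 * H)) / α) := by nlinarith

/-- Canonical-metric increment bound for the approximation error `Y_n = u - u_n`:
for `α ∈ (1,2]`, `H ∈ ((2-α)/2, 1)`, `θ = 1/2 - (1-H)/α` and
`C_H = Γ(2H+1)·sin(πH)/(2π)`, there is a constant `c > 0` such that for all
`0 ≤ a ≤ s ≤ t`,
`C_H · ∫₀ᵃ ∫_ℝ (e^{-(t-r)|ξ|^α} - e^{-(s-r)|ξ|^α})² |ξ|^{1-2H} dξ dr ≤ c·(t-s)^{2θ}`. -/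
theorem stmt_5 (α H θ C_H : ℝ) (hα₁ : 1 < α) (hα₂ : α ≤ 2)
    (hH₁ : (2 - α) / 2 < H) (hH₂ : H < 1)
    (hθ : θ = 1 / 2 - (1 - H) / α)
    (hC : C_H = Real.Gamma (2 * H + 1) * Real.sin (Real.pi * H) / (2 * Real.pi)) :
    ∃ c > (0 : ℝ), ∀ a s t : ℝ, 0 ≤ a → a ≤ s → s ≤ t →
      C_H * (∫ r in Set.Ioc 0 a, ∫ ξ : ℝ,
          (Real.exp (-(t - r) * |ξ| ^ α) - Real.exp (-(s - r) * |ξ| ^ α)) ^ 2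
            * |ξ| ^ (1 - 2 * H))
      ≤ c * (t - s) ^ (2 * θ) :=
  stmt_5_general α H θ C_H hα₁ hH₁ hH₂ hθ
end
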